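/- If F : ℝ² → ℝ² is a C¹ map with det DF ≡ 1 and K : ℝ/ℤ → ℝ² is C¹ and 1-periodic, then the signed area functional is preserved under composition: A(F ∘ K) = A(K), where A(K) = (1/2)∫₀¹ (K₁ K₂' - K₂ K₁') dθ. -/

import Mathlib

/-!
Let `a(s)` be the signed area of the loop `γ(s, t) = F (s • K t)`. Integration by parts over a
period makes `(u, v) ↦ ∫ u × v'` (with `×` the `cross` product) symmetric on closed C¹ loops, so
`A(v) - A(u) = ½ ∫ (v - u) × (v' + u')`; written this way the difference quotient of `a` involves
first derivatives of `F` only, and dominated convergence gives `a'(s) = ∫ ∂ₛγ × ∂ₜγ`.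
As `det DF = 1`, `∂ₛγ × ∂ₜγ = DF (K) × DF (s K') = s (K × K')`, hence `a(s) = s² A(K)`,
and `s = 1` is the claim.
-/

noncomputable def signedArea (K : ℝ → ℝ × ℝ) : ℝ :=
  (1/2 : ℝ) * ∫ θ in (0:ℝ)..1,
    ((K θ).1 * deriv (fun t => (K t).2) θ - (K θ).2 * deriv (fun t => (K t).1) θ)

open Filter Topology Set Metric MeasureTheory

def cross (a b : ℝ × ℝ) : ℝ := a.1 * b.2 - a.2 * b.1

@[fun_prop]
lemma Continuous.cross {α : Type*} [TopologicalSpace α] {f g : α → ℝ × ℝ}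
    (hf : Continuous f) (hg : Continuous g) : Continuous fun x => cross (f x) (g x) := by
  unfold _root_.cross; fun_prop

lemma cross_smul_left (c : ℝ) (a b : ℝ × ℝ) : cross (c • a) b = c * cross a b := by
  simp only [cross, Prod.smul_fst, Prod.smul_snd, smul_eq_mul]; ring

lemma cross_smul_right (c : ℝ) (a b : ℝ × ℝ) : cross a (c • b) = c * cross a b := by
  simp only [cross, Prod.smul_fst, Prod.smul_snd, smul_eq_mul]; ring

lemma abs_cross_le (a b : ℝ × ℝ) : |cross a b| ≤ 2 * (‖a‖ * ‖b‖) := by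
  have h1 : |a.1 * b.2| ≤ ‖a‖ * ‖b‖ := by
    rw [abs_mul]; exact mul_le_mul (norm_fst_le a) (norm_snd_le b) (abs_nonneg _) (norm_nonneg _)
  have h2 : |a.2 * b.1| ≤ ‖a‖ * ‖b‖ := by
    rw [abs_mul]; exact mul_le_mul (norm_snd_le a) (norm_fst_le b) (abs_nonneg _) (norm_nonneg _)
  unfold cross
  linarith [abs_sub (a.1 * b.2) (a.2 * b.1)]

lemma cross_map (L : ℝ × ℝ →L[ℝ] ℝ × ℝ) (a b : ℝ × ℝ) :
    cross (L a) (L b) = LinearMap.det (L : ℝ × ℝ →ₗ[ℝ] ℝ × ℝ) * cross a b := by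
  have hdet : LinearMap.det (L : ℝ × ℝ →ₗ[ℝ] ℝ × ℝ) =
      (L (1, 0)).1 * (L (0, 1)).2 - (L (0, 1)).1 * (L (1, 0)).2 := by
    rw [← LinearMap.det_toMatrix (Module.Basis.finTwoProd ℝ), Matrix.det_fin_two]
    simp [LinearMap.toMatrix_apply, Module.Basis.finTwoProd]
  have hL : ∀ v : ℝ × ℝ, L v = v.1 • L (1, 0) + v.2 • L (0, 1) := fun v => by
    rw [← map_smul, ← map_smul, ← map_add]; congr 1; ext <;> simp
  rw [hdet, hL a, hL b]
  simp only [cross, Prod.fst_add, Prod.snd_add, Prod.smul_fst, Prod.smul_snd, smul_eq_mul]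
  ring

lemma HasDerivAt.fst {E G : Type*} [NormedAddCommGroup E] [NormedSpace ℝ E]
    [NormedAddCommGroup G] [NormedSpace ℝ G] {w : ℝ → E × G} {w' : E × G} {t : ℝ}
    (h : HasDerivAt w w' t) : HasDerivAt (fun s => (w s).1) w'.1 t :=
  (ContinuousLinearMap.fst ℝ E G).hasFDerivAt.comp_hasDerivAt t h

lemma HasDerivAt.snd {E G : Type*} [NormedAddCommGroup E] [NormedSpace ℝ E]
    [NormedAddCommGroup G] [NormedSpace ℝ G] {w : ℝ → E × G} {w' : E × G} {t : ℝ}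
    (h : HasDerivAt w w' t) : HasDerivAt (fun s => (w s).2) w'.2 t :=
  (ContinuousLinearMap.snd ℝ E G).hasFDerivAt.comp_hasDerivAt t h

lemma HasDerivAt.cross {u v : ℝ → ℝ × ℝ} {u' v' : ℝ × ℝ} {t : ℝ}
    (hu : HasDerivAt u u' t) (hv : HasDerivAt v v' t) :
    HasDerivAt (fun s => cross (u s) (v s)) (cross u' (v t) + cross (u t) v') t := by
  refine ((hu.fst.mul hv.snd).sub (hu.snd.mul hv.fst)).congr_deriv ?_
  simp only [_root_.cross]; ring

lemma signedArea_eq_integral_cross {u u' : ℝ → ℝ × ℝ} (hu : ∀ t, HasDerivAt u (u' t) t) :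
    signedArea u = (1/2 : ℝ) * ∫ t in (0:ℝ)..1, cross (u t) (u' t) := by
  have h1 : ∀ t, deriv (fun s => (u s).1) t = (u' t).1 := fun t => (hu t).fst.deriv
  have h2 : ∀ t, deriv (fun s => (u s).2) t = (u' t).2 := fun t => (hu t).snd.deriv
  simp only [signedArea, h1, h2, cross]

lemma signedArea_const (c : ℝ × ℝ) : signedArea (fun _ => c) = 0 := by
  simp [signedArea]

section Loops

variable {u v u' v' : ℝ → ℝ × ℝ}

lemma integral_cross_sub_cross_eq_zero (hu : ∀ t, HasDerivAt u (u' t) t)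
    (hv : ∀ t, HasDerivAt v (v' t) t) (hu' : Continuous u') (hv' : Continuous v')
    (hu1 : u 1 = u 0) (hv1 : v 1 = v 0) :
    ∫ t in (0:ℝ)..1, (cross (u t) (v' t) - cross (v t) (u' t)) = 0 := by
  have hder : ∀ t ∈ uIcc (0:ℝ) 1, HasDerivAt (fun s => cross (u s) (v s))
      (cross (u t) (v' t) - cross (v t) (u' t)) t := fun t _ =>
    ((hu t).cross (hv t)).congr_deriv (by simp only [cross]; ring)
  have hu_c : Continuous u := continuous_iff_continuousAt.2 fun t => (hu t).continuousAt
  have hv_c : Continuous v := continuous_iff_continuousAt.2 fun t => (hv t).continuousAt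
  have hcont : Continuous fun t => cross (u t) (v' t) - cross (v t) (u' t) := by fun_prop
  rw [intervalIntegral.integral_eq_sub_of_hasDerivAt hder (hcont.intervalIntegrable 0 1),
    hu1, hv1, sub_self]

lemma signedArea_sub_signedArea (hu : ∀ t, HasDerivAt u (u' t) t)
    (hv : ∀ t, HasDerivAt v (v' t) t) (hu' : Continuous u') (hv' : Continuous v')
    (hu1 : u 1 = u 0) (hv1 : v 1 = v 0) :
    signedArea v - signedArea u = (1/2 : ℝ) * ∫ t in (0:ℝ)..1, cross (v t - u t) (v' t + u' t) := by
  have hu_c : Continuous u := continuous_iff_continuousAt.2 fun t => (hu t).continuousAt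
  have hv_c : Continuous v := continuous_iff_continuousAt.2 fun t => (hv t).continuousAt
  have hsplit : ∀ t, cross (v t) (v' t) - cross (u t) (u' t) =
      cross (v t - u t) (v' t + u' t) + (cross (u t) (v' t) - cross (v t) (u' t)) := fun t => by
    simp only [cross, Prod.fst_sub, Prod.snd_sub, Prod.fst_add, Prod.snd_add]; ring
  rw [signedArea_eq_integral_cross hv, signedArea_eq_integral_cross hu, ← mul_sub,
    ← intervalIntegral.integral_sub ((by fun_prop : Continuous _).intervalIntegrable _ _)
      ((by fun_prop : Continuous _).intervalIntegrable _ _)]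
  simp only [hsplit]
  rw [intervalIntegral.integral_add ((by fun_prop : Continuous _).intervalIntegrable _ _)
      ((by fun_prop : Continuous _).intervalIntegrable _ _),
    integral_cross_sub_cross_eq_zero hu hv hu' hv' hu1 hv1, add_zero]

end Loops

lemma tendsto_integral_cross_slope {γ γₛ γₜ : ℝ → ℝ → ℝ × ℝ}
    (hs : ∀ s t, HasDerivAt (fun s => γ s t) (γₛ s t) s)
    (ht : ∀ s t, HasDerivAt (γ s) (γₜ s t) t)
    (hγₛ : Continuous (Function.uncurry γₛ)) (hγₜ : Continuous (Function.uncurry γₜ)) (s₀ : ℝ) :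
    Tendsto (fun s => ∫ t in (0:ℝ)..1, cross ((s - s₀)⁻¹ • (γ s t - γ s₀ t)) (γₜ s t + γₜ s₀ t))
      (𝓝[≠] s₀) (𝓝 (∫ t in (0:ℝ)..1, cross (γₛ s₀ t) (γₜ s₀ t + γₜ s₀ t))) := by
  obtain ⟨C₁, hC₁⟩ := (isCompact_closedBall s₀ 1).prod isCompact_Icc |>.exists_bound_of_continuousOn
    (f := Function.uncurry γₛ) (s := closedBall s₀ 1 ×ˢ Icc (0:ℝ) 1) hγₛ.continuousOn
  obtain ⟨C₂, hC₂⟩ := (isCompact_closedBall s₀ 1).prod isCompact_Icc |>.exists_bound_of_continuousOn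
    (f := Function.uncurry γₜ) (s := closedBall s₀ 1 ×ˢ Icc (0:ℝ) 1) hγₜ.continuousOn
  have hball : ∀ᶠ s in 𝓝[≠] s₀, s ∈ closedBall s₀ 1 :=
    mem_nhdsWithin_of_mem_nhds (closedBall_mem_nhds s₀ one_pos)
  refine intervalIntegral.tendsto_integral_filter_of_dominated_convergence
    (fun _ => 2 * (C₁ * (C₂ + C₂))) ?_ ?_ intervalIntegrable_const ?_
  · refine Eventually.of_forall fun s => Continuous.aestronglyMeasurable ?_
    have := continuous_iff_continuousAt.2 fun t => (ht s t).continuousAt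
    have := continuous_iff_continuousAt.2 fun t => (ht s₀ t).continuousAt
    have := hγₜ.uncurry_left s
    have := hγₜ.uncurry_left s₀
    fun_prop
  · filter_upwards [hball, self_mem_nhdsWithin] with s hs_ball hs_ne
    refine ae_of_all _ fun t ht01 => ?_
    have ht01 : t ∈ Icc (0:ℝ) 1 := Ioc_subset_Icc_self (by simpa using ht01)
    have hmvt : ‖γ s t - γ s₀ t‖ ≤ C₁ * ‖s - s₀‖ :=
      (convex_closedBall s₀ 1).norm_image_sub_le_of_norm_hasDerivWithin_le
        (fun x _ => (hs x t).hasDerivWithinAt) (fun x hx => hC₁ (x, t) ⟨hx, ht01⟩)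
        (mem_closedBall_self zero_le_one) hs_ball
    have hquot : ‖(s - s₀)⁻¹ • (γ s t - γ s₀ t)‖ ≤ C₁ := by
      rw [norm_smul, norm_inv, inv_mul_le_iff₀ (norm_pos_iff.2 (sub_ne_zero.2 hs_ne)), mul_comm]
      exact hmvt
    have hsum : ‖γₜ s t + γₜ s₀ t‖ ≤ C₂ + C₂ :=
      (norm_add_le _ _).trans (add_le_add (hC₂ (s, t) ⟨hs_ball, ht01⟩)
        (hC₂ (s₀, t) ⟨mem_closedBall_self zero_le_one, ht01⟩))
    exact (abs_cross_le _ _).trans (mul_le_mul_of_nonneg_left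
      (mul_le_mul hquot hsum (norm_nonneg _) ((norm_nonneg _).trans hquot)) zero_le_two)
  · refine ae_of_all _ fun t _ => ?_
    have h₁ : Tendsto (fun s => (s - s₀)⁻¹ • (γ s t - γ s₀ t)) (𝓝[≠] s₀) (𝓝 (γₛ s₀ t)) :=
      (hasDerivAt_iff_tendsto_slope.1 (hs s₀ t)).congr fun s => slope_def_module _ _ _
    have h₂ : Tendsto (fun s => γₜ s t + γₜ s₀ t) (𝓝[≠] s₀) (𝓝 (γₜ s₀ t + γₜ s₀ t)) :=
      (((hγₜ.uncurry_right t).tendsto s₀).add tendsto_const_nhds).mono_left nhdsWithin_le_nhds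
    exact ((continuous_fst.cross continuous_snd).tendsto _).comp (h₁.prodMk_nhds h₂)

theorem hasDerivAt_signedArea {γ γₛ γₜ : ℝ → ℝ → ℝ × ℝ}
    (hs : ∀ s t, HasDerivAt (fun s => γ s t) (γₛ s t) s)
    (ht : ∀ s t, HasDerivAt (γ s) (γₜ s t) t)
    (hγₛ : Continuous (Function.uncurry γₛ)) (hγₜ : Continuous (Function.uncurry γₜ))
    (hper : ∀ s, γ s 1 = γ s 0) (s₀ : ℝ) :
    HasDerivAt (fun s => signedArea (γ s)) (∫ t in (0:ℝ)..1, cross (γₛ s₀ t) (γₜ s₀ t)) s₀ := by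
  have hslope : ∀ s, slope (fun s => signedArea (γ s)) s₀ s = (1/2 : ℝ) *
      ∫ t in (0:ℝ)..1, cross ((s - s₀)⁻¹ • (γ s t - γ s₀ t)) (γₜ s t + γₜ s₀ t) := fun s => by
    rw [slope_def_module, smul_eq_mul, signedArea_sub_signedArea (ht s₀) (ht s)
      (hγₜ.uncurry_left s₀) (hγₜ.uncurry_left s) (hper s₀) (hper s)]
    simp only [cross_smul_left, intervalIntegral.integral_const_mul]
    ring
  have hlim : ∫ t in (0:ℝ)..1, cross (γₛ s₀ t) (γₜ s₀ t) =
      (1/2 : ℝ) * ∫ t in (0:ℝ)..1, cross (γₛ s₀ t) (γₜ s₀ t + γₜ s₀ t) := by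
    simp only [← two_smul ℝ (γₜ s₀ _), cross_smul_right, intervalIntegral.integral_const_mul]
    ring
  rw [hasDerivAt_iff_tendsto_slope, funext hslope, hlim]
  exact (tendsto_integral_cross_slope hs ht hγₛ hγₜ s₀).const_mul _

section AreaPreserving

variable {F : ℝ × ℝ → ℝ × ℝ} {K : ℝ → ℝ × ℝ}

lemma hasDerivAt_signedArea_comp_smul (hF : ContDiff ℝ 1 F) (hK : ContDiff ℝ 1 K)
    (hper : K 1 = K 0) (s₀ : ℝ) :
    HasDerivAt (fun s => signedArea fun t => F (s • K t))
      (∫ t in (0:ℝ)..1,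
        cross (fderiv ℝ F (s₀ • K t) (K t)) (fderiv ℝ F (s₀ • K t) (s₀ • deriv K t))) s₀ := by
  have hF' : ∀ p, HasFDerivAt F (fderiv ℝ F p) p :=
    fun p => (hF.differentiable one_ne_zero p).hasFDerivAt
  have hK' : ∀ t, HasDerivAt K (deriv K t) t :=
    fun t => (hK.differentiable one_ne_zero t).hasDerivAt
  have hDF : Continuous (fderiv ℝ F) := hF.continuous_fderiv one_ne_zero
  have hKc : Continuous K := hK.continuous
  have hDK : Continuous (deriv K) := hK.continuous_deriv le_rfl
  refine hasDerivAt_signedArea (γ := fun s t => F (s • K t))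
    (γₛ := fun s t => fderiv ℝ F (s • K t) (K t))
    (γₜ := fun s t => fderiv ℝ F (s • K t) (s • deriv K t))
    (fun s t => ?_) (fun s t => ?_) (by fun_prop) (by fun_prop) (fun s => by rw [hper]) s₀
  · have hline : HasDerivAt (fun s : ℝ => s • K t) (K t) s := by
      simpa using (hasDerivAt_id' s).smul_const (K t)
    exact (hF' _).comp_hasDerivAt s hline
  · exact (hF' _).comp_hasDerivAt t ((hK' t).const_smul s)

lemma signedArea_comp_smul_of_det_eq_one (hF : ContDiff ℝ 1 F)
    (hdet : ∀ p, LinearMap.det ((fderiv ℝ F p) : ℝ × ℝ →ₗ[ℝ] ℝ × ℝ) = 1)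
    (hK : ContDiff ℝ 1 K) (hper : K 1 = K 0) (s : ℝ) :
    signedArea (fun t => F (s • K t)) = s ^ 2 * signedArea K := by
  have hK' : ∀ t, HasDerivAt K (deriv K t) t :=
    fun t => (hK.differentiable one_ne_zero t).hasDerivAt
  have hderiv : ∀ s, HasDerivAt (fun s => signedArea (fun t => F (s • K t)) - s ^ 2 * signedArea K)
      0 s := fun s => by
    refine ((hasDerivAt_signedArea_comp_smul hF hK hper s).sub
      ((hasDerivAt_pow 2 s).mul_const _)).congr_deriv ?_
    simp only [cross_map, hdet, one_mul, cross_smul_right, intervalIntegral.integral_const_mul,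
      signedArea_eq_integral_cross hK']
    ring
  have := is_const_of_deriv_eq_zero (fun s => (hderiv s).differentiableAt)
    (fun s => (hderiv s).deriv) s 0
  simpa [signedArea_const, sub_eq_zero] using this

end AreaPreserving

theorem signed_area_preserved (F : ℝ × ℝ → ℝ × ℝ) (hF : ContDiff ℝ 1 F)
    (hdet : ∀ p : ℝ × ℝ, LinearMap.det ((fderiv ℝ F p) : (ℝ × ℝ) →ₗ[ℝ] (ℝ × ℝ)) = 1)
    (K : ℝ → ℝ × ℝ) (hK : ContDiff ℝ 1 K) (hper : ∀ θ : ℝ, K (θ + 1) = K θ) :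
    signedArea (F ∘ K) = signedArea K := by
  simpa [Function.comp_def] using
    signedArea_comp_smul_of_det_eq_one hF hdet hK (by simpa using hper 0) 1
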